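/- arXiv:2401.16481 — 5 statements merged into one kernel-verified Lean document; each statement's English description precedes it below -/
import Mathlib

section
/- Let ψ be a t-doped stabilizer state on N qubits, i.e. ψ = C_t T_{i_t} C_{t−1} T_{i_{t−1}} ⋯ C_1 T_{i_1} C_0 (|0⟩^{⊗N}) where each C_j is a Clifford unitary on N qubits and each T_{i_j} is a T gate acting on some qubit i_j. Then the stabilizer group of ψ has cardinality at least 2^{N−t}; equivalently, the stabilizer dimension satisfies k_ψ ≥ N − t. -/
/-!
A Pauli string that has `ψ` as an eigenvector is automatically a `±1` eigenvector, since it is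
an involution. Conjugation by a Clifford unitary `C` therefore maps the stabilizer of `ψ`
injectively into that of `Cψ`. For a T gate on qubit `i`, the stabilizer elements acting as `I`
or `Z` on qubit `i` commute with `T_i` and survive; they are at least half of the stabilizer,
because multiplying by one fixed element acting as `X` or `Y` there maps the others injectively
onto them. As `|0⟩^{⊗N}` is stabilized by all `2^N` strings of `I`s and `Z`s, each of the `t`
T gates costs at most a factor of two.
-/

open Matrix
open scoped ComplexOrder

/-- The four Pauli matrices. -/
noncomputable def pauli : Fin 4 → Matrix (Fin 2) (Fin 2) ℂ
  | 0 => 1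
  | 1 => !![0, 1; 1, 0]
  | 2 => !![0, -Complex.I; Complex.I, 0]
  | 3 => !![1, 0; 0, -1]

/-- The Pauli string `σ^{α 0} ⊗ ⋯ ⊗ σ^{α (N-1)}` as a `2^N × 2^N` matrix,
indexed by computational-basis labels `Fin N → Fin 2`. -/
noncomputable def pauliString {N : ℕ} (α : Fin N → Fin 4) :
    Matrix (Fin N → Fin 2) (Fin N → Fin 2) ℂ :=
  fun s s' => ∏ j, pauli (α j) (s j) (s' j)

/-- The stabilizer group of `ψ`: the Pauli strings of which `ψ` is a `±1` eigenvector. -/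
def stabGroup {N : ℕ} (ψ : (Fin N → Fin 2) → ℂ) :
    Set (Matrix (Fin N → Fin 2) (Fin N → Fin 2) ℂ) :=
  {σ | (∃ α : Fin N → Fin 4, σ = pauliString α) ∧ (σ *ᵥ ψ = ψ ∨ σ *ᵥ ψ = -ψ)}

/-- A unitary `U` is Clifford if it maps every Pauli string to a Pauli string up to a
phase `c ∈ {1, -1, i, -i}` under conjugation. -/
def IsClifford {N : ℕ} (U : Matrix (Fin N → Fin 2) (Fin N → Fin 2) ℂ) : Prop :=
  U ∈ Matrix.unitaryGroup (Fin N → Fin 2) ℂ ∧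
  ∀ α : Fin N → Fin 4, ∃ (β : Fin N → Fin 4) (c : ℂ),
    (c = 1 ∨ c = -1 ∨ c = Complex.I ∨ c = -Complex.I) ∧
    U * pauliString α * Uᴴ = c • pauliString β

/-- The T gate acting on qubit `i`: `I^{⊗(i-1)} ⊗ diag(1, e^{iπ/4}) ⊗ I^{⊗(N-i)}`. -/
noncomputable def Tgate {N : ℕ} (i : Fin N) :
    Matrix (Fin N → Fin 2) (Fin N → Fin 2) ℂ :=
  Matrix.diagonal fun s => if s i = 1 then Complex.exp (Complex.I * Real.pi / 4) else 1

/-- The state `|0⟩^{⊗N}`. -/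
def zeroState (N : ℕ) : (Fin N → Fin 2) → ℂ :=
  fun s => if s = fun _ => 0 then 1 else 0

noncomputable def pauliPhase : Fin 4 → Fin 4 → ℂ :=
  ![![1, 1, 1, 1], ![1, 1, Complex.I, -Complex.I],
    ![1, -Complex.I, 1, Complex.I], ![1, Complex.I, -Complex.I, 1]]

lemma pauliPhase_ne_zero (a b : Fin 4) : pauliPhase a b ≠ 0 := by
  fin_cases a <;> fin_cases b <;> simp [pauliPhase]

/-- With the labels `I, X, Y, Z = 0, 1, 2, 3`, multiplying Pauli matrices xors their labels. -/
lemma pauli_mul_pauli (a b : Fin 4) :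
    pauli a * pauli b = pauliPhase a b • pauli (a ^^^ b) := by
  fin_cases a <;> fin_cases b <;>
    · ext i j
      fin_cases i <;> fin_cases j <;>
        simp [pauli, pauliPhase, Matrix.mul_apply, Fin.sum_univ_two, Matrix.one_apply]

lemma trace_pauli (a : Fin 4) : (pauli a).trace = if a = 0 then 2 else 0 := by
  fin_cases a <;> simp [pauli, Matrix.trace_fin_two]

lemma pauli_apply_eq_zero {a : Fin 4} (ha : a = 0 ∨ a = 3) {x y : Fin 2} (hxy : x ≠ y) :
    pauli a x y = 0 := by
  rcases ha with rfl | rfl <;> fin_cases x <;> fin_cases y <;> simp_all [pauli]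

section PauliString

variable {N : ℕ}

lemma pauliString_mul (α β : Fin N → Fin 4) :
    pauliString α * pauliString β
      = (∏ j, pauliPhase (α j) (β j)) • pauliString (fun j => α j ^^^ β j) := by
  ext s s'
  have hqubit (j : Fin N) : ∑ x : Fin 2, pauli (α j) (s j) x * pauli (β j) x (s' j)
      = pauliPhase (α j) (β j) * pauli (α j ^^^ β j) (s j) (s' j) := by
    simpa [Matrix.mul_apply] using congrFun₂ (pauli_mul_pauli (α j) (β j)) (s j) (s' j)
  simp only [Matrix.mul_apply, Matrix.smul_apply, pauliString, smul_eq_mul,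
    ← Finset.prod_mul_distrib, ← hqubit]
  exact (Fintype.prod_sum fun j x => pauli (α j) (s j) x * pauli (β j) x (s' j)).symm

lemma pauliString_zero : pauliString (0 : Fin N → Fin 4) = 1 := by
  ext s s'
  by_cases h : s = s'
  · subst h; simp [pauliString, pauli]
  · obtain ⟨j, hj⟩ := Function.ne_iff.mp h
    rw [Matrix.one_apply_ne h]
    exact Finset.prod_eq_zero (Finset.mem_univ j) (by simp [pauli, hj])

lemma pauliString_mul_self (α : Fin N → Fin 4) : pauliString α * pauliString α = 1 := by
  have hphase (a : Fin 4) : pauliPhase a a = 1 := by fin_cases a <;> rfl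
  rw [pauliString_mul]
  simp only [hphase, Fin.xor_self, Finset.prod_const_one, one_smul]
  exact pauliString_zero

lemma trace_pauliString (α : Fin N → Fin 4) :
    (pauliString α).trace = ∏ j, (pauli (α j)).trace := by
  simp only [Matrix.trace, Matrix.diag, pauliString]
  exact (Fintype.prod_sum fun j x => pauli (α j) x x).symm

/-- `σ_β σ_α` is a multiple of a Pauli string, which is traceless unless `α = β`. -/
lemma eq_of_pauliString_eq_smul {α β : Fin N → Fin 4} {c : ℂ}
    (h : pauliString α = c • pauliString β) : α = β := by
  have hc : c ≠ 0 := by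
    rintro rfl
    simpa [h] using pauliString_mul_self α
  have hprod : pauliString β * pauliString α = c • 1 := by
    rw [h, Matrix.mul_smul, pauliString_mul_self]
  rw [pauliString_mul] at hprod
  have htrace := congrArg Matrix.trace hprod
  rw [Matrix.trace_smul, Matrix.trace_smul, Matrix.trace_one, trace_pauliString] at htrace
  have hne : ∏ j, (pauli (β j ^^^ α j)).trace ≠ 0 := by
    intro h0
    simp [h0, hc] at htrace
  funext j
  have hj := Finset.prod_ne_zero_iff.mp hne j (Finset.mem_univ j)
  rw [trace_pauli, ne_eq, ite_eq_right_iff, not_forall] at hj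
  obtain ⟨hxor, -⟩ := hj
  exact (by decide : ∀ a b : Fin 4, b ^^^ a = 0 → a = b) _ _ hxor

lemma pauliString_injective : Function.Injective (pauliString (N := N)) := fun α β h =>
  eq_of_pauliString_eq_smul (c := 1) (by rw [h, one_smul])

lemma pauliString_apply_eq_zero {α : Fin N → Fin 4} {i : Fin N} (hi : α i = 0 ∨ α i = 3)
    {s s' : Fin N → Fin 2} (hs : s i ≠ s' i) : pauliString α s s' = 0 :=
  Finset.prod_eq_zero (Finset.mem_univ i) (pauli_apply_eq_zero hi hs)

lemma commute_Tgate_pauliString {α : Fin N → Fin 4} {i : Fin N} (hi : α i = 0 ∨ α i = 3) :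
    Commute (Tgate i) (pauliString α) := by
  ext s s'
  rw [Tgate, Matrix.diagonal_mul, Matrix.mul_diagonal]
  by_cases hs : s i = s' i
  · rw [hs, mul_comm]
  · rw [pauliString_apply_eq_zero hi hs, mul_zero, zero_mul]

lemma pauliString_mulVec_zeroState {α : Fin N → Fin 4} (hα : ∀ j, α j = 0 ∨ α j = 3) :
    pauliString α *ᵥ zeroState N = zeroState N := by
  ext s
  rw [Matrix.mulVec, dotProduct, Finset.sum_eq_single (fun _ => 0)]
  · by_cases hs : s = fun _ => 0
    · subst hs
      simp only [zeroState, if_true, mul_one]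
      refine Finset.prod_eq_one fun j _ => ?_
      rcases hα j with h | h <;> simp [h, pauli]
    · obtain ⟨j, hj⟩ := Function.ne_iff.mp hs
      simp [zeroState, hs, pauliString_apply_eq_zero (hα j) (s' := fun _ => 0) hj]
  · intro s' _ hs'
    simp [zeroState, hs']
  · simp

end PauliString

lemma mulVec_eq_or_eq_neg_of_mul_self_eq_one {n R : Type*} [Fintype n] [DecidableEq n]
    [CommRing R] [IsDomain R] {P : Matrix n n R} (hP : P * P = 1) {v : n → R} {c : R}
    (hv : P *ᵥ v = c • v) : P *ᵥ v = v ∨ P *ᵥ v = -v := by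
  by_cases hv0 : v = 0
  · simp [hv0]
  have hsq : (c * c) • v = (1 : R) • v := by
    rw [one_smul, mul_smul, ← hv, ← Matrix.mulVec_smul, ← hv, Matrix.mulVec_mulVec, hP,
      Matrix.one_mulVec]
  rcases mul_self_eq_one_iff.mp (smul_left_injective R hv0 hsq) with rfl | rfl
  · simp [hv]
  · simp [hv]

section Stabilizer

variable {N : ℕ}

/-- Since Pauli strings are involutions, every such eigenvalue is `±1`: this is the set of
labels of `stabGroup ψ`. -/
def stabLabels (ψ : (Fin N → Fin 2) → ℂ) : Set (Fin N → Fin 4) :=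
  {α | ∃ c : ℂ, pauliString α *ᵥ ψ = c • ψ}

lemma stabGroup_eq_image_stabLabels (ψ : (Fin N → Fin 2) → ℂ) :
    stabGroup ψ = pauliString '' stabLabels ψ := by
  ext σ
  constructor
  · rintro ⟨⟨α, rfl⟩, hα | hα⟩
    · exact ⟨α, ⟨1, by rw [hα, one_smul]⟩, rfl⟩
    · exact ⟨α, ⟨-1, by rw [hα, neg_one_smul]⟩, rfl⟩
  · rintro ⟨α, ⟨c, hc⟩, rfl⟩
    exact ⟨⟨α, rfl⟩, mulVec_eq_or_eq_neg_of_mul_self_eq_one (pauliString_mul_self α) hc⟩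

lemma natCard_stabGroup (ψ : (Fin N → Fin 2) → ℂ) :
    Nat.card (stabGroup ψ) = (stabLabels ψ).ncard := by
  rw [Nat.card_coe_set_eq, stabGroup_eq_image_stabLabels,
    Set.ncard_image_of_injective _ pauliString_injective]

lemma zero_mem_stabLabels (ψ : (Fin N → Fin 2) → ℂ) : 0 ∈ stabLabels ψ :=
  ⟨1, by rw [pauliString_zero, Matrix.one_mulVec, one_smul]⟩

lemma ncard_stabLabels_pos (ψ : (Fin N → Fin 2) → ℂ) : 0 < (stabLabels ψ).ncard :=
  (Set.ncard_pos).mpr ⟨0, zero_mem_stabLabels ψ⟩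

lemma xor_mem_stabLabels {ψ : (Fin N → Fin 2) → ℂ} {α β : Fin N → Fin 4}
    (hα : α ∈ stabLabels ψ) (hβ : β ∈ stabLabels ψ) :
    (fun j => α j ^^^ β j) ∈ stabLabels ψ := by
  obtain ⟨a, ha⟩ := hα
  obtain ⟨b, hb⟩ := hβ
  set d := ∏ j, pauliPhase (α j) (β j)
  have hd : d ≠ 0 := Finset.prod_ne_zero_iff.mpr fun j _ => pauliPhase_ne_zero _ _
  refine ⟨d⁻¹ * (a * b), ?_⟩
  rw [← inv_smul_smul₀ hd (pauliString _ *ᵥ ψ), ← Matrix.smul_mulVec, ← pauliString_mul,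
    ← Matrix.mulVec_mulVec, hb, Matrix.mulVec_smul, ha, smul_smul, smul_smul, mul_assoc, mul_comm b]

lemma two_pow_le_ncard_stabLabels_zeroState (N : ℕ) :
    2 ^ N ≤ (stabLabels (zeroState N)).ncard := by
  set D := Fintype.piFinset fun _ : Fin N => ({0, 3} : Finset (Fin 4))
  calc 2 ^ N = D.card := by simp [D, Fintype.card_piFinset]
    _ = (D : Set (Fin N → Fin 4)).ncard := (Set.ncard_coe_finset D).symm
    _ ≤ (stabLabels (zeroState N)).ncard := Set.ncard_le_ncard fun α hα =>
        ⟨1, by rw [one_smul]; exact pauliString_mulVec_zeroState (by simpa [D] using hα)⟩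

lemma IsClifford.ncard_stabLabels_le {U : Matrix (Fin N → Fin 2) (Fin N → Fin 2) ℂ}
    (hU : IsClifford U) (ψ : (Fin N → Fin 2) → ℂ) :
    (stabLabels ψ).ncard ≤ (stabLabels (U *ᵥ ψ)).ncard := by
  choose β c hc hconj using hU.2
  have hc0 (α) : c α ≠ 0 := by rcases hc α with h | h | h | h <;> simp [h]
  have hUU : Uᴴ * U = 1 := Matrix.mem_unitaryGroup_iff'.mp hU.1
  have hback (α) : pauliString α = c α • (Uᴴ * pauliString (β α) * U) := by
    rw [← Matrix.smul_mul, ← Matrix.mul_smul, ← hconj]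
    simp only [← mul_assoc, hUU, one_mul]
    rw [mul_assoc, hUU, mul_one]
  refine Set.ncard_le_ncard_of_injOn β ?_ ?_
  · rintro α ⟨e, he⟩
    refine ⟨(c α)⁻¹ * e, ?_⟩
    rw [← inv_smul_smul₀ (hc0 α) (pauliString (β α)), ← hconj, Matrix.smul_mulVec,
      Matrix.mulVec_mulVec, mul_assoc, mul_assoc, hUU, mul_one, ← Matrix.mulVec_mulVec, he,
      Matrix.mulVec_smul, smul_smul]
  · intro α₁ _ α₂ _ h
    refine eq_of_pauliString_eq_smul (c := c α₁ / c α₂) ?_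
    rw [hback α₁, hback α₂, h, smul_smul, div_mul_cancel₀ _ (hc0 α₂)]

/-- The labels acting diagonally on qubit `i` survive `T_i`; those acting as `X` or `Y` there are
mapped injectively onto diagonal ones by multiplying with any one of them. -/
lemma ncard_stabLabels_le_two_mul_Tgate (i : Fin N) (ψ : (Fin N → Fin 2) → ℂ) :
    (stabLabels ψ).ncard ≤ 2 * (stabLabels (Tgate i *ᵥ ψ)).ncard := by
  set S := stabLabels ψ
  set Z := {α ∈ S | α i = 0 ∨ α i = 3}
  have hZ : Z ⊆ stabLabels (Tgate i *ᵥ ψ) := by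
    rintro α ⟨⟨c, hc⟩, hi⟩
    refine ⟨c, ?_⟩
    rw [Matrix.mulVec_mulVec, ← (commute_Tgate_pauliString hi).eq, ← Matrix.mulVec_mulVec, hc,
      Matrix.mulVec_smul]
  have hdiff : (S \ Z).ncard ≤ Z.ncard := by
    rcases (S \ Z).eq_empty_or_nonempty with he | ⟨α₀, hα₀S, hα₀Z⟩
    · simp [he]
    refine Set.ncard_le_ncard_of_injOn (fun α j => α₀ j ^^^ α j) ?_ ?_
    · rintro α ⟨hαS, hαZ⟩
      refine ⟨xor_mem_stabLabels hα₀S hαS, ?_⟩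
      have hxy : ∀ a b : Fin 4, ¬(a = 0 ∨ a = 3) → ¬(b = 0 ∨ b = 3) →
          a ^^^ b = 0 ∨ a ^^^ b = 3 := by decide
      exact hxy _ _ (fun h => hα₀Z ⟨hα₀S, h⟩) (fun h => hαZ ⟨hαS, h⟩)
    · intro α _ β _ h
      have hcancel : ∀ a b c : Fin 4, a ^^^ b = a ^^^ c → b = c := by decide
      exact funext fun j => hcancel _ _ _ (congrFun h j)
  have hsplit := Set.ncard_sdiff_add_ncard_of_subset (show Z ⊆ S from Set.sep_subset _ _)
  have hmono := Set.ncard_le_ncard hZ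
  omega

end Stabilizer

lemma two_pow_sub_succ_le {n j m : ℕ} (hm : 0 < m) (h : 2 ^ (n - j) ≤ 2 * m) :
    2 ^ (n - (j + 1)) ≤ m := by
  rcases lt_or_ge j n with hj | hj
  · rw [show n - j = n - (j + 1) + 1 by omega, pow_succ] at h
    omega
  · rwa [Nat.sub_eq_zero_of_le (by omega : n ≤ j + 1), pow_zero]

/-- If `ψ = C_t T_{i_t} C_{t-1} ⋯ C_1 T_{i_1} C_0 |0⟩^{⊗N}` is a t-doped
stabilizer state (each `C_j` Clifford, each `T_{i_j}` a T gate on some qubit), then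
`|G_S(ψ)| ≥ 2^(N - t)`, i.e. the stabilizer dimension satisfies `k_ψ ≥ N - t`. -/
theorem stabGroup_card_tDoped {N t : ℕ}
    (C : ℕ → Matrix (Fin N → Fin 2) (Fin N → Fin 2) ℂ)
    (idx : ℕ → Fin N)
    (hC : ∀ j ≤ t, IsClifford (C j))
    (φ : ℕ → (Fin N → Fin 2) → ℂ)
    (hφ0 : φ 0 = C 0 *ᵥ zeroState N)
    (hφ : ∀ j < t, φ (j + 1) = C (j + 1) *ᵥ (Tgate (idx (j + 1)) *ᵥ φ j))
    (ψ : (Fin N → Fin 2) → ℂ) (hψ : ψ = φ t) :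
    2 ^ (N - t) ≤ Nat.card (stabGroup ψ) := by
  have hstep : ∀ j ≤ t, 2 ^ (N - j) ≤ (stabLabels (φ j)).ncard := by
    intro j hj
    induction j with
    | zero =>
      rw [hφ0]
      exact (two_pow_le_ncard_stabLabels_zeroState N).trans ((hC 0 hj).ncard_stabLabels_le _)
    | succ j ih =>
      rw [hφ j hj]
      refine two_pow_sub_succ_le (ncard_stabLabels_pos _) ?_
      calc 2 ^ (N - j) ≤ (stabLabels (φ j)).ncard := ih (by omega)
        _ ≤ 2 * (stabLabels (Tgate (idx (j + 1)) *ᵥ φ j)).ncard :=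
          ncard_stabLabels_le_two_mul_Tgate _ _
        _ ≤ _ := Nat.mul_le_mul_left 2 ((hC (j + 1) hj).ncard_stabLabels_le _)
  rw [hψ, natCard_stabGroup]
  exact hstep t le_rfl
end

section
/- Let ψ ∈ ℂ^{2^n} ⊗ ℂ^{2^m} be a normalized state on n + m qubits with ρ = |ψ⟩⟨ψ|, and let P be a Pauli string on the first n qubits. Define the marginal probability π(P) = Σ_{Q ∈ 𝒫_m} (1/2^{n+m}) Tr[ρ (P ⊗ Q)]², where the sum runs over all Pauli strings Q on the last m qubits. Then π(P) = (1/2^n) Tr[X²], where X = Tr_A[ρ (P ⊗ I_{2^m})] is the partial trace over the first factor ℂ^{2^n} of ρ (P ⊗ I), a Hermitian 2^m × 2^m matrix. Equivalently, π(P) equals (1/2^n) times the squared Frobenius norm of X. -/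
open Matrix
open scoped ComplexOrder

open Kronecker

/-! Since `P ⊗ Q = (P ⊗ I)(I ⊗ Q)`, the expectation `Tr[ρ (P ⊗ Q)]` equals `Tr[X Q]` with
`X = Tr_A[ρ (P ⊗ I)]`. By Parseval for the orthogonal basis of Pauli strings,
`∑_Q Tr[X Q]² = 2^m Tr[X²]`. That `X` is Hermitian follows from the cyclicity of the partial trace
with respect to operators acting on the traced factor: `Tr_A[ρ (P ⊗ I)] = Tr_A[(P ⊗ I) ρ]`. -/

namespace Matrix

variable {ι κ R : Type*} [Fintype ι]

def partialTraceFst [AddCommMonoid R] (M : Matrix (ι × κ) (ι × κ) R) : Matrix κ κ R :=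
  fun b b' => ∑ a, M (a, b) (a, b')

theorem conjTranspose_partialTraceFst [AddCommMonoid R] [StarAddMonoid R]
    (M : Matrix (ι × κ) (ι × κ) R) : (partialTraceFst M)ᴴ = partialTraceFst Mᴴ := by
  ext b b'
  simp [partialTraceFst, star_sum]

variable [Fintype κ]

theorem partialTraceFst_mul_kronecker_one_comm [CommSemiring R] [DecidableEq κ] (M : Matrix (ι × κ) (ι × κ) R)
    (A : Matrix ι ι R) :
    partialTraceFst (M * (A ⊗ₖ 1)) = partialTraceFst ((A ⊗ₖ 1) * M) := by
  ext b b'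
  simp only [partialTraceFst, mul_apply, Fintype.sum_prod_type, kroneckerMap_apply, one_apply,
    mul_ite, ite_mul, mul_one, mul_zero, zero_mul, Finset.sum_ite_eq, Finset.sum_ite_eq',
    Finset.mem_univ, if_true]
  rw [Finset.sum_comm]
  simp_rw [mul_comm]

theorem IsHermitian.partialTraceFst_mul_kronecker_one [CommSemiring R] [StarRing R]
    [DecidableEq κ] {M : Matrix (ι × κ) (ι × κ) R} {A : Matrix ι ι R} (hM : M.IsHermitian)
    (hA : A.IsHermitian) : (partialTraceFst (M * (A ⊗ₖ 1))).IsHermitian := by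
  rw [IsHermitian, conjTranspose_partialTraceFst, conjTranspose_mul, conjTranspose_kronecker,
    hM.eq, hA.eq, conjTranspose_one, ← partialTraceFst_mul_kronecker_one_comm]

theorem trace_partialTraceFst_mul [CommSemiring R] [DecidableEq ι] (N : Matrix (ι × κ) (ι × κ) R)
    (B : Matrix κ κ R) : trace (partialTraceFst N * B) = trace (N * (1 ⊗ₖ B)) := by
  simp only [trace, diag_apply, mul_apply, partialTraceFst, Finset.sum_mul, kroneckerMap_apply,
    one_apply, ite_mul, one_mul, zero_mul, mul_ite, mul_zero, Fintype.sum_prod_type,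
    Finset.sum_ite_irrel, Finset.sum_const_zero, Finset.sum_ite_eq', Finset.mem_univ, ↓reduceIte]
  exact (Finset.sum_comm.trans (Finset.sum_congr rfl fun _ _ => Finset.sum_comm)).symm

theorem trace_mul_kronecker [CommSemiring R] [DecidableEq ι] [DecidableEq κ] (M : Matrix (ι × κ) (ι × κ) R)
    (A : Matrix ι ι R) (B : Matrix κ κ R) :
    trace (M * (A ⊗ₖ B)) = trace (partialTraceFst (M * (A ⊗ₖ 1)) * B) := by
  rw [trace_partialTraceFst_mul, Matrix.mul_assoc, ← mul_kronecker_mul, mul_one, one_mul]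

end Matrix

theorem pauli_isHermitian (k : Fin 4) : (pauli k).IsHermitian := by
  ext a b
  fin_cases k <;> fin_cases a <;> fin_cases b <;> simp [pauli]

theorem pauliString_isHermitian {N : ℕ} (α : Fin N → Fin 4) : (pauliString α).IsHermitian := by
  ext s s'
  simp [pauliString, star_prod, (pauli_isHermitian _).apply]

theorem sum_pauli_apply_mul_apply (a b c d : Fin 2) :
    ∑ k, pauli k a b * pauli k c d = if a = d ∧ b = c then 2 else 0 := by
  fin_cases a <;> fin_cases b <;> fin_cases c <;> fin_cases d <;>
    simp [pauli, Fin.sum_univ_four] <;> norm_num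

theorem sum_pauliString_apply_mul_apply {N : ℕ} (s s' t t' : Fin N → Fin 2) :
    ∑ β : Fin N → Fin 4, pauliString β s s' * pauliString β t t' =
      if s = t' ∧ s' = t then 2 ^ N else 0 := by
  simp only [pauliString, ← Finset.prod_mul_distrib]
  rw [← Fintype.prod_sum fun j k => pauli k (s j) (s' j) * pauli k (t j) (t' j)]
  simp only [sum_pauli_apply_mul_apply, Fintype.prod_ite_zero, Finset.prod_const, Finset.card_univ,
    Fintype.card_fin, funext_iff, forall_and]

/-- Pauli expansion: the `4 ^ N` Pauli strings are an orthogonal basis of the `2 ^ N × 2 ^ N`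
matrices for the pairing `(A, B) ↦ Tr[A B]`, each of squared norm `2 ^ N`. -/
theorem sum_trace_mul_pauliString_smul {N : ℕ} (A : Matrix (Fin N → Fin 2) (Fin N → Fin 2) ℂ) :
    ∑ β, trace (A * pauliString β) • pauliString β = (2 ^ N : ℂ) • A := by
  ext t t'
  simp only [Matrix.sum_apply, Matrix.smul_apply, trace, diag_apply, mul_apply, smul_eq_mul,
    Finset.sum_mul]
  rw [Finset.sum_comm]
  refine (Finset.sum_congr rfl fun _ _ => Finset.sum_comm).trans ?_
  simp only [mul_assoc, ← Finset.mul_sum, sum_pauliString_apply_mul_apply]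
  simp [ite_and, mul_comm]

theorem sum_trace_mul_pauliString_mul_trace_mul_pauliString {N : ℕ}
    (A B : Matrix (Fin N → Fin 2) (Fin N → Fin 2) ℂ) :
    ∑ β, trace (A * pauliString β) * trace (B * pauliString β) = 2 ^ N * trace (A * B) := by
  calc ∑ β, trace (A * pauliString β) * trace (B * pauliString β)
      = trace (B * ∑ β, trace (A * pauliString β) • pauliString β) := by
        simp only [Matrix.mul_sum, trace_sum, mul_smul_comm, trace_smul, smul_eq_mul]
    _ = 2 ^ N * trace (A * B) := by
        rw [sum_trace_mul_pauliString_smul, mul_smul_comm, trace_smul, trace_mul_comm, smul_eq_mul]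

theorem marginal_prob_eq_partialTrace_general {n m : ℕ}
    (ψ : ((Fin n → Fin 2) × (Fin m → Fin 2)) → ℂ)
    (α : Fin n → Fin 4)
    (X : Matrix (Fin m → Fin 2) (Fin m → Fin 2) ℂ)
    (hX : X = fun b b' => ∑ a,
      (Matrix.vecMulVec ψ (star ψ) * (pauliString α ⊗ₖ (1 : Matrix (Fin m → Fin 2) (Fin m → Fin 2) ℂ))) (a, b) (a, b')) :
    X.IsHermitian ∧
    ∑ β : Fin m → Fin 4,
        Matrix.trace (Matrix.vecMulVec ψ (star ψ) * (pauliString α ⊗ₖ pauliString β)) ^ 2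
          / 2 ^ (n + m)
      = Matrix.trace (X * X) / 2 ^ n := by
  rw [show X = partialTraceFst (vecMulVec ψ (star ψ) * (pauliString α ⊗ₖ 1)) from hX]
  refine ⟨(posSemidef_vecMulVec_self_star ψ).isHermitian.partialTraceFst_mul_kronecker_one
    (pauliString_isHermitian α), ?_⟩
  simp_rw [trace_mul_kronecker _ (pauliString α), sq, ← Finset.sum_div,
    sum_trace_mul_pauliString_mul_trace_mul_pauliString, pow_add]
  field_simp

/-- For a normalized state `ψ` on `n + m` qubits with `ρ = |ψ⟩⟨ψ|` and a
Pauli string `P` on the first `n` qubits, the marginal probability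
`π(P) = ∑_{Q ∈ 𝒫_m} Tr[ρ (P ⊗ Q)]² / 2^{n+m}` equals `Tr[X²] / 2^n`, where
`X = Tr_A[ρ (P ⊗ I)]` is the partial trace over the first factor, a Hermitian matrix. -/
theorem marginal_prob_eq_partialTrace {n m : ℕ}
    (ψ : ((Fin n → Fin 2) × (Fin m → Fin 2)) → ℂ)
    (hψ : ∑ s, ‖ψ s‖ ^ 2 = 1)
    (α : Fin n → Fin 4)
    (X : Matrix (Fin m → Fin 2) (Fin m → Fin 2) ℂ)
    (hX : X = fun b b' => ∑ a,
      (Matrix.vecMulVec ψ (star ψ) * (pauliString α ⊗ₖ (1 : Matrix (Fin m → Fin 2) (Fin m → Fin 2) ℂ))) (a, b) (a, b')) :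
    X.IsHermitian ∧
    ∑ β : Fin m → Fin 4,
        Matrix.trace (Matrix.vecMulVec ψ (star ψ) * (pauliString α ⊗ₖ pauliString β)) ^ 2
          / 2 ^ (n + m)
      = Matrix.trace (X * X) / 2 ^ n :=
  marginal_prob_eq_partialTrace_general ψ α X hX
end

section
/- Let A⁰, A¹ be χ × χ' complex matrices satisfying the right-normalization condition A⁰ (A⁰)† + A¹ (A¹)† = I_χ, and let σ be one of the four Pauli matrices σ⁰, σ¹, σ², σ³. Then for every χ' × χ' complex matrix R, the matrix E[R] = Σ_{s',s ∈ {0,1}} (σ̄)_{s' s} A^{s'} R (A^{s})† (where σ̄ is the entrywise complex conjugate of σ) satisfies the operator-norm contraction ‖E[R]‖_∞ ≤ ‖R‖_∞, where ‖·‖_∞ denotes the largest singular value. -/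
open Matrix
open scoped ComplexOrder

open scoped Matrix.Norms.L2Operator

private lemma sum_mulVec' {n m : ℕ} (M : Fin 2 → Matrix (Fin m) (Fin n) ℂ) (v : Fin n → ℂ) :
    (∑ s, M s) *ᵥ v = ∑ s, M s *ᵥ v := by
  ext i
  simp only [Matrix.mulVec, dotProduct, Matrix.sum_apply, Finset.sum_apply,
    Finset.sum_mul]
  rw [Finset.sum_comm]

private lemma dp_sum {m : ℕ} (v : Fin m → ℂ) (w : Fin 2 → Fin m → ℂ) :
    v ⬝ᵥ (∑ s, w s) = ∑ s, v ⬝ᵥ w s := by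
  simp only [dotProduct, Finset.sum_apply, Finset.mul_sum]
  rw [Finset.sum_comm]

private lemma norm_e_sq {n : ℕ} (v : Fin n → ℂ) :
    ‖(WithLp.equiv 2 (Fin n → ℂ)).symm v‖ ^ 2 = (star v ⬝ᵥ v).re := by
  have h := inner_self_eq_norm_sq (𝕜 := ℂ) ((WithLp.equiv 2 (Fin n → ℂ)).symm v)
  rw [← h, WithLp.equiv_symm_apply, EuclideanSpace.inner_toLp_toLp, dotProduct_comm]
  rfl

private lemma sum_norm_sq {n m : ℕ} (C : Fin 2 → Matrix (Fin m) (Fin n) ℂ)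
    (hC : ∑ s, C s * (C s)ᴴ = 1) (v : Fin m → ℂ) :
    ∑ s, ‖(WithLp.equiv 2 (Fin n → ℂ)).symm ((C s)ᴴ *ᵥ v)‖ ^ 2
      = ‖(WithLp.equiv 2 (Fin m → ℂ)).symm v‖ ^ 2 := by
  simp only [norm_e_sq]
  have : ∀ s : Fin 2, (star ((C s)ᴴ *ᵥ v) ⬝ᵥ ((C s)ᴴ *ᵥ v)) =
      star v ⬝ᵥ ((C s * (C s)ᴴ) *ᵥ v) := by
    intro s
    rw [star_mulVec, conjTranspose_conjTranspose, ← Matrix.mulVec_mulVec,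
      ← Matrix.dotProduct_mulVec]
  simp only [this]
  rw [← Complex.re_sum]
  congr 1
  rw [← dp_sum, ← sum_mulVec', hC, Matrix.one_mulVec]

private lemma key_contraction {χ χ' : ℕ}
    (A B : Fin 2 → Matrix (Fin χ) (Fin χ') ℂ)
    (hA : ∑ s, A s * (A s)ᴴ = 1) (hB : ∑ s, B s * (B s)ᴴ = 1)
    (R : Matrix (Fin χ') (Fin χ') ℂ) :
    ‖∑ s : Fin 2, A s * R * (B s)ᴴ‖ ≤ ‖R‖ := by
  rw [Matrix.l2_opNorm_def]
  refine ContinuousLinearMap.opNorm_le_bound _ (norm_nonneg R) ?_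
  intro x
  set xv : Fin χ → ℂ := WithLp.equiv 2 _ x with hxv
  simp only [LinearEquiv.trans_apply, LinearMap.coe_toContinuousLinearMap',
    Matrix.toEuclideanLin_apply]
  change ‖(WithLp.equiv 2 (Fin χ → ℂ)).symm ((∑ s : Fin 2, A s * R * (B s)ᴴ) *ᵥ xv)‖ ≤ ‖R‖ * ‖x‖
  set u : Fin χ → ℂ := (∑ s : Fin 2, A s * R * (B s)ᴴ) *ᵥ xv with hu
  clear_value u
  set a : Fin 2 → ℝ := fun s => ‖(WithLp.equiv 2 (Fin χ' → ℂ)).symm ((A s)ᴴ *ᵥ u)‖ with ha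
  set b : Fin 2 → ℝ := fun s => ‖(WithLp.equiv 2 (Fin χ' → ℂ)).symm ((B s)ᴴ *ᵥ xv)‖ with hb
  have hxnorm : ‖x‖ = ‖(WithLp.equiv 2 (Fin χ → ℂ)).symm xv‖ := by
    rw [hxv, Equiv.symm_apply_apply]
  have hbound : ‖(WithLp.equiv 2 (Fin χ → ℂ)).symm u‖ ^ 2 ≤ ‖R‖ * ∑ s, a s * b s := by
    rw [norm_e_sq]
    calc (star u ⬝ᵥ u).re = (∑ s : Fin 2, star u ⬝ᵥ ((A s * R * (B s)ᴴ) *ᵥ xv)).re := by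
          rw [hu, sum_mulVec', dp_sum]
      _ = ∑ s : Fin 2, (star u ⬝ᵥ ((A s * R * (B s)ᴴ) *ᵥ xv)).re := by
          rw [Complex.re_sum]
      _ ≤ ∑ s : Fin 2, a s * (‖R‖ * b s) := by
          refine Finset.sum_le_sum fun s _ => ?_
          have hterm : star u ⬝ᵥ ((A s * R * (B s)ᴴ) *ᵥ xv) =
              (inner ℂ ((WithLp.equiv 2 (Fin χ' → ℂ)).symm ((A s)ᴴ *ᵥ u))
                ((WithLp.equiv 2 (Fin χ' → ℂ)).symm (R *ᵥ ((B s)ᴴ *ᵥ xv))) : ℂ) := by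
            rw [WithLp.equiv_symm_apply, EuclideanSpace.inner_toLp_toLp, dotProduct_comm (R *ᵥ _), star_mulVec,
              conjTranspose_conjTranspose, Matrix.mulVec_mulVec,
              ← Matrix.dotProduct_mulVec, Matrix.mulVec_mulVec, Matrix.mul_assoc]
          rw [hterm]
          calc (inner ℂ ((WithLp.equiv 2 (Fin χ' → ℂ)).symm ((A s)ᴴ *ᵥ u))
                ((WithLp.equiv 2 (Fin χ' → ℂ)).symm (R *ᵥ ((B s)ᴴ *ᵥ xv))) : ℂ).re
              ≤ ‖(inner ℂ ((WithLp.equiv 2 (Fin χ' → ℂ)).symm ((A s)ᴴ *ᵥ u))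
                ((WithLp.equiv 2 (Fin χ' → ℂ)).symm (R *ᵥ ((B s)ᴴ *ᵥ xv))) : ℂ)‖ :=
                Complex.re_le_norm _
            _ ≤ a s * ‖(WithLp.equiv 2 (Fin χ' → ℂ)).symm (R *ᵥ ((B s)ᴴ *ᵥ xv))‖ :=
                norm_inner_le_norm _ _
            _ ≤ a s * (‖R‖ * b s) := by
                refine mul_le_mul_of_nonneg_left ?_ (norm_nonneg _)
                exact Matrix.l2_opNorm_mulVec R
                  ((WithLp.equiv 2 (Fin χ' → ℂ)).symm ((B s)ᴴ *ᵥ xv))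
      _ = ‖R‖ * ∑ s, a s * b s := by
          rw [Finset.mul_sum]; congr 1; funext s; ring
  have hCS : ∑ s, a s * b s ≤ ‖(WithLp.equiv 2 (Fin χ → ℂ)).symm u‖ * ‖x‖ := by
    have h1 : ∑ s, a s ^ 2 = ‖(WithLp.equiv 2 (Fin χ → ℂ)).symm u‖ ^ 2 :=
      sum_norm_sq A hA u
    have h2 : ∑ s, b s ^ 2 = ‖x‖ ^ 2 := by rw [hxnorm]; exact sum_norm_sq B hB xv
    have hcs := Finset.sum_mul_sq_le_sq_mul_sq Finset.univ a b
    rw [h1, h2] at hcs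
    have hnn : (0:ℝ) ≤ ‖(WithLp.equiv 2 (Fin χ → ℂ)).symm u‖ * ‖x‖ :=
      mul_nonneg (norm_nonneg _) (norm_nonneg _)
    nlinarith [Finset.sum_nonneg (fun s (_ : s ∈ Finset.univ) =>
      mul_nonneg (norm_nonneg ((WithLp.equiv 2 (Fin χ' → ℂ)).symm ((A s)ᴴ *ᵥ u)))
        (norm_nonneg ((WithLp.equiv 2 (Fin χ' → ℂ)).symm ((B s)ᴴ *ᵥ xv))))]
  by_cases hz : ‖(WithLp.equiv 2 (Fin χ → ℂ)).symm u‖ = 0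
  · rw [hz]; exact mul_nonneg (norm_nonneg _) (norm_nonneg _)
  · have hpos : 0 < ‖(WithLp.equiv 2 (Fin χ → ℂ)).symm u‖ :=
      lt_of_le_of_ne (norm_nonneg _) (Ne.symm hz)
    nlinarith [hbound, hCS, mul_le_mul_of_nonneg_left hCS (norm_nonneg R)]

/-- For right-normalized MPS site tensors `A⁰, A¹` (i.e.
`A⁰ (A⁰)† + A¹ (A¹)† = I`) and a Pauli matrix `σ`, the Pauli-dressed transfer map
`E[R] = ∑_{s',s} (σ̄)_{s's} A^{s'} R (A^s)†` is a contraction in the operator norm: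
`‖E[R]‖_∞ ≤ ‖R‖_∞`. -/
theorem transferMap_opNorm_contraction {χ χ' : ℕ}
    (A : Fin 2 → Matrix (Fin χ) (Fin χ') ℂ)
    (hA : ∑ s, A s * (A s)ᴴ = 1)
    (a : Fin 4)
    (R : Matrix (Fin χ') (Fin χ') ℂ) :
    ‖∑ s' : Fin 2, ∑ s : Fin 2,
        (starRingEnd ℂ) (pauli a s' s) • (A s' * R * (A s)ᴴ)‖ ≤ ‖R‖ := by
  set B : Fin 2 → Matrix (Fin χ) (Fin χ') ℂ := fun s' => ∑ s, pauli a s' s • A s with hBdef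
  have h1 : ∑ s' : Fin 2, ∑ s : Fin 2,
      (starRingEnd ℂ) (pauli a s' s) • (A s' * R * (A s)ᴴ)
      = ∑ s' : Fin 2, A s' * R * (B s')ᴴ := by
    refine Finset.sum_congr rfl fun s' _ => ?_
    rw [hBdef]
    simp only [conjTranspose_sum, conjTranspose_smul, Matrix.mul_sum, Matrix.mul_smul,
      Complex.star_def]
  have hA2 : A 0 * (A 0)ᴴ + A 1 * (A 1)ᴴ = 1 := by
    simpa [Fin.sum_univ_two] using hA
  have h2 : ∑ s', B s' * (B s')ᴴ = 1 := by
    rw [hBdef]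
    fin_cases a <;>
      simp [pauli, Fin.sum_univ_two, Matrix.smul_mul, Matrix.mul_smul, smul_smul,
        conjTranspose_smul, conjTranspose_neg, Complex.conj_I, Matrix.one_apply,
        Matrix.cons_val_zero, Matrix.cons_val_one, Matrix.head_cons, Complex.I_mul_I,
        neg_mul, mul_neg, neg_neg] <;>
      first
        | exact hA2
        | (rw [add_comm]; exact hA2)
  rw [h1]
  exact key_contraction A B hA h2 R
end

section
/- Fix N and bond dimensions χ₀, χ₁, …, χ_N with χ_N = 1. For each k = 1,…,N let A_k⁰, A_k¹ be χ_{k−1} × χ_k complex matrices with A_k⁰ (A_k⁰)† + A_k¹ (A_k¹)† = I_{χ_{k−1}}, and let σ_k be one of the four Pauli matrices. Define environment matrices by R_N = (1) (the 1 × 1 identity) and, for k = N, N−1, …, i+1, R_{k−1} = (1/√2) Σ_{s',s ∈ {0,1}} (σ̄_k)_{s' s} A_k^{s'} R_k (A_k^{s})†. Then for every i ∈ {0,…,N} the operator norm of the environment satisfies ‖R_i‖_∞ ≤ 2^{−(N−i)/2}. -/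
open Matrix
open scoped ComplexOrder

open scoped Matrix.Norms.L2Operator

section AuxEnv
open scoped Matrix.Norms.L2Operator

lemma bd_norm_le {n k : Type*} [Fintype n] [DecidableEq n] [Fintype k] [DecidableEq k]
    (R : Matrix n n ℂ) :
    ‖blockDiagonal (fun _ : k => R)‖ ≤ ‖R‖ := by
  rw [Matrix.l2_opNorm_def]
  refine ContinuousLinearMap.opNorm_le_bound _ (norm_nonneg R) fun x => ?_
  simp only [LinearEquiv.trans_apply, LinearMap.coe_toContinuousLinearMap']
  rw [← Real.sqrt_sq (norm_nonneg _), ← Real.sqrt_sq (by positivity : (0:ℝ) ≤ ‖R‖ * ‖x‖)]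
  apply Real.sqrt_le_sqrt
  have hlhs : ‖toEuclideanLin (blockDiagonal (fun _ : k => R)) x‖ ^ 2
      = ∑ p : n × k, ‖(blockDiagonal (fun _ : k => R) *ᵥ (WithLp.equiv 2 _ x)) p‖ ^ 2 := by
    rw [EuclideanSpace.norm_eq, Real.sq_sqrt (by positivity)]
    rfl
  have hx : ‖x‖ ^ 2 = ∑ p : n × k, ‖(WithLp.equiv 2 _ x) p‖ ^ 2 := by
    rw [EuclideanSpace.norm_eq, Real.sq_sqrt (by positivity)]
    rfl
  rw [hlhs]
  rw [Fintype.sum_prod_type_right]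
  have key : ∀ s : k, ∑ j : n, ‖(blockDiagonal (fun _ : k => R) *ᵥ (WithLp.equiv 2 _ x)) (j, s)‖ ^ 2
      ≤ ‖R‖ ^ 2 * ∑ j : n, ‖(WithLp.equiv 2 _ x) (j, s)‖ ^ 2 := by
    intro s
    set y : EuclideanSpace ℂ n := (WithLp.equiv 2 _).symm (fun j => (WithLp.equiv 2 _ x) (j, s))
    have h1 : ∀ j, (blockDiagonal (fun _ : k => R) *ᵥ (WithLp.equiv 2 _ x)) (j, s)
        = (R *ᵥ (fun j' => (WithLp.equiv 2 _ x) (j', s))) j := by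
      intro j
      simp [mulVec, dotProduct, blockDiagonal_apply, Fintype.sum_prod_type_right]
    have h2 : ∑ j : n, ‖(blockDiagonal (fun _ : k => R) *ᵥ (WithLp.equiv 2 _ x)) (j, s)‖ ^ 2
        = ‖(EuclideanSpace.equiv n ℂ).symm (R *ᵥ (WithLp.equiv 2 _ y))‖ ^ 2 := by
      rw [EuclideanSpace.norm_eq, Real.sq_sqrt (by positivity)]
      exact Finset.sum_congr rfl fun j _ => by rw [h1 j]; rfl
    rw [h2]
    have h3 := Matrix.l2_opNorm_mulVec R y
    have h4 : ‖y‖ ^ 2 = ∑ j : n, ‖(WithLp.equiv 2 _ x) (j, s)‖ ^ 2 := by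
      rw [EuclideanSpace.norm_eq, Real.sq_sqrt (by positivity)]
      rfl
    calc ‖(EuclideanSpace.equiv n ℂ).symm (R *ᵥ (WithLp.equiv 2 _ y))‖ ^ 2
        ≤ (‖R‖ * ‖y‖) ^ 2 := by
          apply pow_le_pow_left₀ (norm_nonneg _) _ 2
          exact h3
      _ = ‖R‖ ^ 2 * ‖y‖ ^ 2 := by ring
      _ = _ := by rw [h4]
  calc ∑ s : k, ∑ j : n, ‖(blockDiagonal (fun _ : k => R) *ᵥ (WithLp.equiv 2 _ x)) (j, s)‖ ^ 2
      ≤ ∑ s : k, ‖R‖ ^ 2 * ∑ j : n, ‖(WithLp.equiv 2 _ x) (j, s)‖ ^ 2 :=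
        Finset.sum_le_sum fun s _ => key s
    _ = ‖R‖ ^ 2 * ∑ s : k, ∑ j : n, ‖(WithLp.equiv 2 _ x) (j, s)‖ ^ 2 := by
        rw [Finset.mul_sum]
    _ = (‖R‖ * ‖x‖) ^ 2 := by
        rw [mul_pow, hx, Fintype.sum_prod_type_right]
lemma one_norm_le {n : Type*} [Fintype n] [DecidableEq n] :
    ‖(1 : Matrix n n ℂ)‖ ≤ 1 := by
  have h : ‖(1 : Matrix n n ℂ)‖ * ‖(1 : Matrix n n ℂ)‖ = ‖(1 : Matrix n n ℂ)‖ := by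
    rw [← Matrix.l2_opNorm_conjTranspose_mul_self (1 : Matrix n n ℂ)]
    simp
  nlinarith [norm_nonneg (1 : Matrix n n ℂ)]

lemma flat_mul_flatH {m n : Type*} [Fintype m] [Fintype n]
    (A : Fin 2 → Matrix m n ℂ) :
    (Matrix.of fun i (p : n × Fin 2) => A p.2 i p.1) *
      (Matrix.of fun i (p : n × Fin 2) => A p.2 i p.1)ᴴ = ∑ s, A s * (A s)ᴴ := by
  ext i j
  simp [mul_apply, conjTranspose_apply, Fintype.sum_prod_type_right, Finset.sum_apply,
    Finset.sum_comm (γ := Fin 2)]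
  rw [Finset.sum_add_distrib]

lemma key_bound {m n : Type*} [Fintype m] [DecidableEq m] [Fintype n] [DecidableEq n]
    (A C : Fin 2 → Matrix m n ℂ)
    (hA : ∑ s, A s * (A s)ᴴ = 1) (hC : ∑ s, C s * (C s)ᴴ = 1)
    (R : Matrix n n ℂ) :
    ‖∑ s, C s * R * (A s)ᴴ‖ ≤ ‖R‖ := by
  set At : Matrix m (n × Fin 2) ℂ := Matrix.of fun i (p : n × Fin 2) => A p.2 i p.1
  set Ct : Matrix m (n × Fin 2) ℂ := Matrix.of fun i (p : n × Fin 2) => C p.2 i p.1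
  have hfact : ∑ s, C s * R * (A s)ᴴ = Ct * blockDiagonal (fun _ : Fin 2 => R) * Atᴴ := by
    ext i j
    simp [mul_apply, conjTranspose_apply, blockDiagonal_apply, Fintype.sum_prod_type_right,
      Finset.sum_apply, At, Ct, Finset.mul_sum, Finset.sum_mul]
  have hAt : ‖Atᴴ‖ ≤ 1 := by
    have h2 : ‖Atᴴ‖ * ‖Atᴴ‖ = ‖At * Atᴴ‖ := by
      rw [← Matrix.l2_opNorm_conjTranspose_mul_self Atᴴ, conjTranspose_conjTranspose]
    have h3 : At * Atᴴ = 1 := by rw [flat_mul_flatH A, hA]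
    rw [h3, ] at h2
    have h4 := one_norm_le (n := m)
    nlinarith [norm_nonneg Atᴴ]
  have hCt : ‖Ct‖ ≤ 1 := by
    have h2 : ‖Ctᴴ‖ * ‖Ctᴴ‖ = ‖Ct * Ctᴴ‖ := by
      rw [← Matrix.l2_opNorm_conjTranspose_mul_self Ctᴴ, conjTranspose_conjTranspose]
    have h3 : Ct * Ctᴴ = 1 := by rw [flat_mul_flatH C, hC]
    rw [h3] at h2
    rw [← Matrix.l2_opNorm_conjTranspose Ct]
    have h4 := one_norm_le (n := m)
    nlinarith [norm_nonneg Ctᴴ]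
  rw [hfact]
  calc ‖Ct * blockDiagonal (fun _ : Fin 2 => R) * Atᴴ‖
      ≤ ‖Ct * blockDiagonal (fun _ : Fin 2 => R)‖ * ‖Atᴴ‖ := Matrix.l2_opNorm_mul _ _
    _ ≤ ‖Ct‖ * ‖blockDiagonal (fun _ : Fin 2 => R)‖ * ‖Atᴴ‖ := by
        have := Matrix.l2_opNorm_mul Ct (blockDiagonal (fun _ : Fin 2 => R))
        have h0 : (0:ℝ) ≤ ‖Atᴴ‖ := norm_nonneg _
        nlinarith [norm_nonneg (Ct * blockDiagonal (fun _ : Fin 2 => R))]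
    _ ≤ 1 * ‖R‖ * 1 := by
        have hbd := bd_norm_le (k := Fin 2) R
        gcongr
    _ = ‖R‖ := by ring

lemma step_bound {m n : Type*} [Fintype m] [DecidableEq m] [Fintype n] [DecidableEq n]
    (u : Fin 4) (A : Fin 2 → Matrix m n ℂ)
    (hA : ∑ s, A s * (A s)ᴴ = 1) (R : Matrix n n ℂ) :
    ‖∑ s' : Fin 2, ∑ s : Fin 2, (starRingEnd ℂ) (pauli u s' s) • (A s' * R * (A s)ᴴ)‖
      ≤ ‖R‖ := by
  set C : Fin 2 → Matrix m n ℂ := fun s => ∑ s', (starRingEnd ℂ) (pauli u s' s) • A s' with hCdef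
  have h1 : ∑ s' : Fin 2, ∑ s : Fin 2, (starRingEnd ℂ) (pauli u s' s) • (A s' * R * (A s)ᴴ)
      = ∑ s, C s * R * (A s)ᴴ := by
    rw [Finset.sum_comm]
    refine Finset.sum_congr rfl fun s _ => ?_
    simp only [hCdef, Fin.sum_univ_two, Matrix.add_mul, Matrix.smul_mul]
  have hC : ∑ s, C s * (C s)ᴴ = 1 := by
    have h2 := hA
    rw [Fin.sum_univ_two] at h2 ⊢
    fin_cases u <;>
      (simp [hCdef, pauli, Fin.sum_univ_two, conjTranspose_smul, conjTranspose_add,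
        Matrix.smul_mul, Matrix.mul_smul, smul_smul, Matrix.one_apply] <;>
       (rw [← h2]; try abel))
  rw [h1]
  exact key_bound A C hA hC R

end AuxEnv


/-- For a right-normalized MPS with bond dimensions `χ₀, …, χ_N` (with
`χ_N = 1`) and Pauli matrices `σ₁, …, σ_N`, the right environment matrices defined by
`R_N = (1)` and `R_{k-1} = (1/√2) ∑_{s',s} (σ̄_k)_{s's} A_k^{s'} R_k (A_k^s)†` satisfy
`‖R_i‖_∞ ≤ 2^{-(N-i)/2}` for every `i`. -/
theorem environment_opNorm_bound {N : ℕ}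
    (χ : Fin (N + 1) → ℕ) (hχ : χ (Fin.last N) = 1)
    (A : (k : Fin N) → Fin 2 → Matrix (Fin (χ k.castSucc)) (Fin (χ k.succ)) ℂ)
    (hA : ∀ k, ∑ s, A k s * (A k s)ᴴ = 1)
    (σ : Fin N → Fin 4)
    (R : (k : Fin (N + 1)) → Matrix (Fin (χ k)) (Fin (χ k)) ℂ)
    (hRN : R (Fin.last N) = 1)
    (hrec : ∀ k : Fin N, R k.castSucc =
      ((Real.sqrt 2 : ℂ))⁻¹ • ∑ s' : Fin 2, ∑ s : Fin 2,
        (starRingEnd ℂ) (pauli (σ k) s' s) • (A k s' * R k.succ * (A k s)ᴴ)) :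
    ∀ i : Fin (N + 1), ‖R i‖ ≤ (2 : ℝ) ^ (-(((N - (i : ℕ) : ℕ)) : ℝ) / 2) := by
  intro i
  induction i using Fin.reverseInduction with
  | last =>
    rw [hRN]
    simp only [Fin.val_last, Nat.sub_self, Nat.cast_zero, neg_zero, zero_div, Real.rpow_zero]
    exact one_norm_le
  | cast k ih =>
    rw [hrec k, norm_smul]
    have hb := step_bound (σ k) (A k) (hA k) (R k.succ)
    have hnorm : ‖((Real.sqrt 2 : ℂ))⁻¹‖ = (Real.sqrt 2)⁻¹ := by
      rw [norm_inv, Complex.norm_real, Real.norm_eq_abs,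
        abs_of_nonneg (Real.sqrt_nonneg 2)]
    rw [hnorm]
    have hk : (k : ℕ) < N := k.isLt
    have hsub : N - (k : ℕ) = (N - ((k : ℕ) + 1)) + 1 := by omega
    have hih : ‖R k.succ‖ ≤ (2 : ℝ) ^ (-(((N - ((k : ℕ) + 1) : ℕ)) : ℝ) / 2) := by
      simpa using ih
    set a : ℕ := N - ((k : ℕ) + 1) with ha
    have hgoal : ((N - ((k.castSucc : ℕ)) : ℕ) : ℝ) = (a : ℝ) + 1 := by
      simp only [Fin.coe_castSucc]
      rw [hsub]
      push_cast
      ring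
    have hchain : (Real.sqrt 2)⁻¹ * ‖∑ s' : Fin 2, ∑ s : Fin 2,
        (starRingEnd ℂ) (pauli (σ k) s' s) • (A k s' * R k.succ * (A k s)ᴴ)‖
        ≤ (Real.sqrt 2)⁻¹ * ((2 : ℝ) ^ (-((a : ℝ)) / 2)) := by
      have h1 := le_trans hb hih
      have h2 : (0:ℝ) ≤ (Real.sqrt 2)⁻¹ := by positivity
      exact mul_le_mul_of_nonneg_left h1 h2
    refine le_trans hchain (le_of_eq ?_)
    rw [hgoal]
    rw [Real.sqrt_eq_rpow, ← Real.rpow_neg (by norm_num : (0:ℝ) ≤ 2),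
      ← Real.rpow_add (by norm_num : (0:ℝ) < 2)]
    congr 1
    ring
end

section
/- Fix N and bond dimensions χ₀, χ₁, …, χ_N with χ_N = 1. For each k = 1,…,N let A_k⁰, A_k¹ be χ_{k−1} × χ_k complex matrices with A_k⁰ (A_k⁰)† + A_k¹ (A_k¹)† = I_{χ_{k−1}}, and let σ_k be one of the four Pauli matrices. Define environment matrices by R_N = (1) (the 1 × 1 identity) and, for k = N, N−1, …, i+1, R_{k−1} = (1/√2) Σ_{s',s ∈ {0,1}} (σ̄_k)_{s' s} A_k^{s'} R_k (A_k^{s})†. Then for every i ∈ {0,…,N} the squared Frobenius norm of the environment satisfies ‖R_i‖₂² = Tr[R_i† R_i] ≤ χ_i / 2^{N−i}. -/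
open Matrix
open scoped ComplexOrder

namespace EnvAux
variable {n : Type*} [Fintype n] [DecidableEq n]

lemma psd_trace_nonneg {M : Matrix n n ℂ} (h : M.PosSemidef) : 0 ≤ M.trace := by
  refine Finset.sum_nonneg fun i _ => ?_
  have := h.dotProduct_mulVec_nonneg (Pi.single i 1)
  simpa [dotProduct, mulVec, Pi.single_apply] using this

lemma psd_smul {M : Matrix n n ℂ} (h : M.PosSemidef) {c : ℂ} (hc : 0 ≤ c) :
    ((c • M : Matrix n n ℂ)).PosSemidef := by
  refine posSemidef_iff_dotProduct_mulVec.mpr ⟨?_, ?_⟩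
  · have hcc : (starRingEnd ℂ) c = c := by
      rw [Complex.nonneg_iff] at hc
      exact Complex.conj_eq_iff_im.2 hc.2.symm
    unfold Matrix.IsHermitian
    rw [conjTranspose_smul, h.1.eq]
    simp [hcc]
  · intro x
    rw [smul_mulVec, dotProduct_smul]
    exact mul_nonneg hc (h.dotProduct_mulVec_nonneg x)

lemma pauli_unitary (a : Fin 4) : (pauli a)ᴴ * pauli a = 1 := by
  fin_cases a <;>
  · ext i j
    fin_cases i <;> fin_cases j <;>
      simp [pauli, Matrix.mul_apply, Fin.sum_univ_two, Complex.ext_iff] <;> norm_num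

lemma pauli_row_orth (a : Fin 4) (s s' : Fin 2) :
    ∑ t, pauli a t s * (starRingEnd ℂ) (pauli a t s') = if s = s' then 1 else 0 := by
  fin_cases a <;> fin_cases s <;> fin_cases s' <;>
    simp [pauli, Matrix.one_apply, Fin.sum_univ_two, Complex.ext_iff] <;> norm_num

end EnvAux

set_option maxHeartbeats 1000000 in
/-- Lemma 3 of the paper: For a right-normalized MPS with bond dimensions
`χ₀, …, χ_N` (with `χ_N = 1`) and Pauli matrices `σ₁, …, σ_N`, the right environment
matrices defined by `R_N = (1)` and
`R_{k-1} = (1/√2) ∑_{s',s} (σ̄_k)_{s's} A_k^{s'} R_k (A_k^s)†` satisfy the squared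
Frobenius norm bound `‖R_i‖₂² = Tr[R_i† R_i] ≤ χ_i / 2^{N-i}` for every `i`. -/
theorem environment_frobenius_bound {N : ℕ}
    (χ : Fin (N + 1) → ℕ) (hχ : χ (Fin.last N) = 1)
    (A : (k : Fin N) → Fin 2 → Matrix (Fin (χ k.castSucc)) (Fin (χ k.succ)) ℂ)
    (hA : ∀ k, ∑ s, A k s * (A k s)ᴴ = 1)
    (σ : Fin N → Fin 4)
    (R : (k : Fin (N + 1)) → Matrix (Fin (χ k)) (Fin (χ k)) ℂ)
    (hRN : R (Fin.last N) = 1)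
    (hrec : ∀ k : Fin N, R k.castSucc =
      ((Real.sqrt 2 : ℂ))⁻¹ • ∑ s' : Fin 2, ∑ s : Fin 2,
        (starRingEnd ℂ) (pauli (σ k) s' s) • (A k s' * R k.succ * (A k s)ᴴ)) :
    ∀ i : Fin (N + 1),
      Matrix.trace ((R i)ᴴ * R i) ≤ (χ i : ℂ) / 2 ^ (N - (i : ℕ)) := by
  have key : ∀ i : Fin (N + 1),
      Matrix.PosSemidef ((((2 : ℂ) ^ (N - (i : ℕ)))⁻¹ • 1 : Matrix (Fin (χ i)) (Fin (χ i)) ℂ)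
        - (R i)ᴴ * R i) := by
    refine Fin.reverseInduction ?_ ?_
    · simp [hRN, Matrix.PosSemidef.zero]
    · intro k ih
      set M := R k.succ with hMdef
      set c' : ℂ := ((2:ℂ) ^ (N - (k.succ : ℕ)))⁻¹ with hc'
      set B : Matrix (Fin (χ k.castSucc)) (Fin 2 × Fin (χ k.succ)) ℂ :=
        Matrix.of (fun i p => A k p.1 i p.2) with hBdef
      set K : Matrix (Fin 2 × Fin (χ k.succ)) (Fin 2 × Fin (χ k.succ)) ℂ :=
        Matrix.of (fun p q => (starRingEnd ℂ) (pauli (σ k) p.1 q.1) * M p.2 q.2) with hKdef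
      have hBB : B * Bᴴ = 1 := by
        ext i j
        have h := congrFun (congrFun (hA k) i) j
        simp only [Matrix.sum_apply, Matrix.mul_apply, Matrix.conjTranspose_apply] at h
        simp only [Matrix.mul_apply, Matrix.conjTranspose_apply, hBdef, Matrix.of_apply,
          Fintype.sum_prod_type]
        rw [← h]
      have hR : R k.castSucc = ((Real.sqrt 2 : ℂ))⁻¹ • (B * K * Bᴴ) := by
        rw [hrec k]
        congr 1
        ext i j
        simp only [Matrix.sum_apply, Matrix.smul_apply, smul_eq_mul, Matrix.mul_apply,
          Matrix.conjTranspose_apply, Fintype.sum_prod_type, Finset.mul_sum, Finset.sum_mul,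
          hBdef, hKdef, Matrix.of_apply, starRingEnd_apply]
        rw [Finset.sum_comm]
        refine Finset.sum_congr rfl fun s _ => ?_
        rw [Finset.sum_comm]
        refine Finset.sum_congr rfl fun b _ => Finset.sum_congr rfl fun s' _ =>
          Finset.sum_congr rfl fun a _ => ?_
        ring
      have hKKe : ∀ p q, (Kᴴ * K) p q
          = (if p.1 = q.1 then (1:ℂ) else 0) * (Mᴴ * M) p.2 q.2 := by
        intro p q
        have h1 : (Kᴴ * K) p q = ∑ t1 : Fin 2, ∑ t2 : Fin (χ k.succ),
            (pauli (σ k) t1 p.1 * (starRingEnd ℂ) (pauli (σ k) t1 q.1)) *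
            ((starRingEnd ℂ) (M t2 p.2) * M t2 q.2) := by
          rw [Matrix.mul_apply, Fintype.sum_prod_type]
          refine Finset.sum_congr rfl fun t1 _ => Finset.sum_congr rfl fun t2 _ => ?_
          simp only [Matrix.conjTranspose_apply, hKdef, Matrix.of_apply]
          simp only [starRingEnd_apply, star_mul', star_star]
          try ring
        rw [h1, ← Finset.sum_mul_sum, EnvAux.pauli_row_orth]
        congr 1
        try rw [Matrix.mul_apply]
        try simp only [Matrix.conjTranspose_apply, starRingEnd_apply]
      have hEe : ∀ p q, (c' • 1 - Kᴴ * K : Matrix (Fin 2 × Fin (χ k.succ)) (Fin 2 × Fin (χ k.succ)) ℂ) p q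
          = if p.1 = q.1 then (c' • 1 - Mᴴ * M) p.2 q.2 else 0 := by
        intro p q
        simp only [Matrix.sub_apply, Matrix.smul_apply, Matrix.one_apply, hKKe, smul_eq_mul,
          Prod.ext_iff]
        by_cases h : p.1 = q.1 <;> simp [h]
      have hstar : (starRingEnd ℂ) c' = c' := by
        simp [hc', map_inv₀, map_pow, Complex.conj_ofNat]
      have hKK : Matrix.PosSemidef (c' • 1 - Kᴴ * K) := by
        refine posSemidef_iff_dotProduct_mulVec.mpr ⟨?_, ?_⟩
        · have hone : ((c' • 1 : Matrix (Fin 2 × Fin (χ k.succ)) (Fin 2 × Fin (χ k.succ)) ℂ)).IsHermitian := by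
            unfold Matrix.IsHermitian
            rw [Matrix.conjTranspose_smul, Matrix.conjTranspose_one]
            rw [starRingEnd_apply] at hstar
            rw [hstar]
          exact hone.sub (Matrix.isHermitian_conjTranspose_mul_self K)
        · intro x
          have expand : dotProduct (star x) ((c' • 1 - Kᴴ * K) *ᵥ x)
              = ∑ s : Fin 2, dotProduct (star (fun i => x (s, i)))
                  ((c' • 1 - Mᴴ * M) *ᵥ (fun i => x (s, i))) := by
            simp only [dotProduct, Matrix.mulVec, Fintype.sum_prod_type, Pi.star_apply,
              hEe, ite_mul, zero_mul, Finset.sum_ite_irrel, Finset.sum_const_zero,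
              Finset.sum_ite_eq, Finset.sum_ite_eq', Finset.mem_univ, if_true]
          rw [expand]
          exact Finset.sum_nonneg fun s _ => ih.dotProduct_mulVec_nonneg _
      have hproj : Matrix.PosSemidef (1 - Bᴴ * B) := by
        have hPP : (Bᴴ * B) * (Bᴴ * B) = Bᴴ * B := by
          rw [Matrix.mul_assoc, ← Matrix.mul_assoc B, hBB, Matrix.one_mul]
        have hQ : (1 - Bᴴ * B) = (1 - Bᴴ * B)ᴴ * (1 - Bᴴ * B) := by
          rw [Matrix.conjTranspose_sub, Matrix.conjTranspose_one, Matrix.conjTranspose_mul,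
            Matrix.conjTranspose_conjTranspose, Matrix.sub_mul, Matrix.one_mul,
            Matrix.mul_sub, Matrix.mul_one, hPP]
          abel
        rw [hQ]
        exact Matrix.posSemidef_conjTranspose_mul_self _
      have h1 : Matrix.PosSemidef (Kᴴ * (1 - Bᴴ * B) * K) :=
        hproj.conjTranspose_mul_mul_same K
      have hsum : Matrix.PosSemidef (c' • 1 - Kᴴ * Bᴴ * B * K) := by
        have he : (c' • 1 - Kᴴ * K) + Kᴴ * (1 - Bᴴ * B) * K
            = c' • (1 : Matrix (Fin 2 × Fin (χ k.succ)) (Fin 2 × Fin (χ k.succ)) ℂ) - Kᴴ * Bᴴ * B * K := by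
          rw [Matrix.mul_sub, Matrix.mul_one, Matrix.sub_mul, sub_add_sub_cancel]
          simp only [Matrix.mul_assoc]
        exact he ▸ hKK.add h1
      have h3 : Matrix.PosSemidef (c' • 1 - B * Kᴴ * Bᴴ * B * K * Bᴴ) := by
        have := hsum.mul_mul_conjTranspose_same B
        have he : B * (c' • 1 - Kᴴ * Bᴴ * B * K) * Bᴴ
            = c' • (1 : Matrix (Fin (χ k.castSucc)) (Fin (χ k.castSucc)) ℂ) - B * Kᴴ * Bᴴ * B * K * Bᴴ := by
          rw [Matrix.mul_sub, Matrix.sub_mul, Matrix.mul_smul, Matrix.mul_one, Matrix.smul_mul, hBB]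
          simp only [Matrix.mul_assoc]
        exact he ▸ this
      have hhalf : ((0:ℂ)) ≤ (2:ℂ)⁻¹ := by
        rw [show ((2:ℂ))⁻¹ = (((2:ℝ)⁻¹ : ℝ) : ℂ) by norm_num]
        exact_mod_cast Complex.zero_le_real.2 (by norm_num)
      have h4 := EnvAux.psd_smul h3 hhalf
      have he2 : (2:ℂ)⁻¹ • (c' • (1 : Matrix (Fin (χ k.castSucc)) (Fin (χ k.castSucc)) ℂ) - B * Kᴴ * Bᴴ * B * K * Bᴴ)
          = ((2:ℂ) ^ (N - (k.castSucc : ℕ)))⁻¹ • 1 - (R k.castSucc)ᴴ * R k.castSucc := by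
        have ha : star (((Real.sqrt 2 : ℝ) : ℂ))⁻¹ * (((Real.sqrt 2 : ℝ) : ℂ))⁻¹
            = (2:ℂ)⁻¹ := by
          rw [star_inv₀, Complex.star_def, Complex.conj_ofReal, ← mul_inv, ← Complex.ofReal_mul,
            Real.mul_self_sqrt (by norm_num)]
          norm_num
        have hexp : N - (k.castSucc : ℕ) = (N - (k.succ : ℕ)) + 1 := by
          have hk := k.is_lt
          simp only [Fin.coe_castSucc, Fin.val_succ]
          omega
        have hc2 : ((2:ℂ) ^ (N - (k.castSucc : ℕ)))⁻¹ = (2:ℂ)⁻¹ * c' := by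
          rw [hexp, hc', pow_succ, mul_inv]
          ring
        rw [hR, Matrix.conjTranspose_smul, Matrix.smul_mul, Matrix.mul_smul, smul_smul, ha, hc2,
          smul_sub, smul_smul]
        simp only [Matrix.conjTranspose_mul, Matrix.conjTranspose_conjTranspose, Matrix.mul_assoc]

      exact he2 ▸ h4
  intro i
  have h := key i
  have ht : 0 ≤ Matrix.trace ((((2 : ℂ) ^ (N - (i : ℕ)))⁻¹ • 1 : Matrix (Fin (χ i)) (Fin (χ i)) ℂ) - (R i)ᴴ * R i) := EnvAux.psd_trace_nonneg h
  rw [Matrix.trace_sub, Matrix.trace_smul, Matrix.trace_one, sub_nonneg] at ht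
  calc Matrix.trace ((R i)ᴴ * R i) ≤ ((2 : ℂ) ^ (N - (i : ℕ)))⁻¹ • (Fintype.card (Fin (χ i)) : ℂ) := ht
    _ = (χ i : ℂ) / 2 ^ (N - (i : ℕ)) := by
        simp [Fintype.card_fin, smul_eq_mul, div_eq_mul_inv, mul_comm]
end
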